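/- Let Cl(p,q,r) be a Clifford algebra with n = p+q+r odd. The center of Cl(p,q,r) equals the direct sum of the even part of Λ_r (subalgebra generated by the null generators) and the grade-n subspace. -/

import Mathlib

/-!
Through `CliffordAlgebra.equivExterior`, the ordered products `e_S` of distinct generators
correspond to the standard basis of the exterior algebra, so they form a basis of `Cl(p,q,r)`.
A generator satisfies `e_j e_S = (-1)^|S \ {j}| e_S e_j`. If `x` is central, then
`e_j (∑ c_S (1 - (-1)^|S \ {j}|) e_S) = e_j x - x e_j = 0`, and left multiplication by `e_j`
loses no coefficient `c_S` with `j ∉ S` (and none at all when `e_j² ≠ 0`). Hence every `e_S`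
occurring in `x` has `|S \ {j}|` even for all `j ∉ S` and all non-null `j`: either `S` is
everything, or `S` is an even set of null indices. Conversely, a null generator anticommutes with
every generator, so `e_j x = involute x * e_j` for `x ∈ Λ_r`, and `e_1 ⋯ e_n` commutes with each
`e_j` because `n - 1` is even.
-/

open CliffordAlgebra

noncomputable section

/-- Diagonal weights: `p` entries `+1`, `q` entries `-1`, `r` entries `0`. -/
def cliffSig (p q : ℕ) (i : ℕ) : ℝ := if i < p then 1 else if i < p + q then -1 else 0

/-- The quadratic form of signature `(p, q, r)` on `ℝ^(p+q+r)`. -/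
def Qf (p q r : ℕ) : QuadraticForm ℝ (Fin (p + q + r) → ℝ) :=
  QuadraticMap.weightedSumSquares ℝ (fun i : Fin (p + q + r) => cliffSig p q (i : ℕ))

/-- The `i`-th generator `e_i` of `Cl(p,q,r)`. -/
def gen (p q r : ℕ) (i : Fin (p + q + r)) : CliffordAlgebra (Qf p q r) :=
  ι (Qf p q r) (Pi.single i 1)

/-- The grade-`m` subspace `Cl^m(p,q,r)`: span of products of `m` distinct generators
with increasing indices. -/
def gradeSubspace (p q r m : ℕ) : Submodule ℝ (CliffordAlgebra (Qf p q r)) :=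
  Submodule.span ℝ {x | ∃ l : List (Fin (p + q + r)),
    l.Chain' (· < ·) ∧ l.length = m ∧ x = (l.map (gen p q r)).prod}

/-- `Λ_r`: the subalgebra generated by the `r` null generators. -/
def LambdaR (p q r : ℕ) : Subalgebra ℝ (CliffordAlgebra (Qf p q r)) :=
  Algebra.adjoin ℝ {x | ∃ i : Fin (p + q + r), p + q ≤ (i : ℕ) ∧ x = gen p q r i}

/-- `Λ^d_r`: the degree-`d` component of `Λ_r`. -/
def LambdaDeg (p q r d : ℕ) : Submodule ℝ (CliffordAlgebra (Qf p q r)) :=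
  Submodule.span ℝ {x | ∃ l : List (Fin (p + q + r)),
    l.Chain' (· < ·) ∧ l.length = d ∧ (∀ i ∈ l, p + q ≤ (i : ℕ)) ∧
    x = (l.map (gen p q r)).prod}

/-- The pseudoscalar `e_1 ⋯ e_n`. -/
def pseudoscalar (p q r : ℕ) : CliffordAlgebra (Qf p q r) :=
  ((List.finRange (p + q + r)).map (gen p q r)).prod
namespace CliffordAlgebra

variable {R M : Type*} [CommRing R] [AddCommGroup M] [Module R M]

theorem contractLeft_prod_map_ι_eq_zero {Q : QuadraticForm R M} (d : Module.Dual R M) {l : List M}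
    (hl : ∀ a ∈ l, d a = 0) : contractLeft d (l.map (ι Q)).prod = 0 := by
  induction l with
  | nil => simp
  | cons a t ih =>
    simp only [List.forall_mem_cons] at hl
    rw [List.map_cons, List.prod_cons, contractLeft_ι_mul, hl.1, ih hl.2, zero_smul, mul_zero,
      sub_zero]

theorem changeForm_prod_map_ι {Q Q' : QuadraticForm R M} {B : LinearMap.BilinForm R M}
    (h : B.toQuadraticMap = Q' - Q) {l : List M} (hl : l.Pairwise fun a b => B a b = 0) :
    changeForm h (l.map (ι Q)).prod = (l.map (ι Q')).prod := by
  induction l with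
  | nil => simp
  | cons a t ih =>
    rw [List.pairwise_cons] at hl
    rw [List.map_cons, List.prod_cons, changeForm_ι_mul, ih hl.2,
      contractLeft_prod_map_ι_eq_zero _ hl.1, sub_zero, List.map_cons, List.prod_cons]

theorem equivExterior_prod_map_ι [Invertible (2 : R)] {Q : QuadraticForm R M} {l : List M}
    (hl : l.Pairwise Q.IsOrtho) :
    equivExterior Q (l.map (ι Q)).prod = (l.map (ExteriorAlgebra.ι R)).prod := by
  refine changeForm_prod_map_ι changeForm.associated_neg_proof (hl.imp fun h => ?_)
  rw [QuadraticMap.associated_isOrtho, QuadraticMap.isOrtho_def, neg_apply,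
    QuadraticMap.isOrtho_def.mp h, neg_add]
  rfl

end CliffordAlgebra

theorem ExteriorAlgebra.basis_apply_eq_prod_sort {R M I : Type*} [CommRing R] [AddCommGroup M]
    [Module R M] [LinearOrder I] (b : Module.Basis I R M) (s : Finset I) :
    b.ExteriorAlgebra s = (s.sort.map (ExteriorAlgebra.ι R ∘ b)).prod := by
  rw [ExteriorAlgebra.basis_apply_ofCard b rfl, ExteriorAlgebra.ιMulti_family,
    ExteriorAlgebra.ιMulti_apply, List.ofFn_eq_map,
    ← Finset.listMap_orderEmbOfFin_finRange s rfl, List.map_map]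
  rfl

namespace Module.Basis

variable {R M I : Type*} [CommRing R] [AddCommGroup M] [Module R M] [LinearOrder I]
  [Invertible (2 : R)]

def cliffordAlgebra (b : Module.Basis I R M) (Q : QuadraticForm R M) :
    Module.Basis (Finset I) R (CliffordAlgebra Q) :=
  b.ExteriorAlgebra.map (equivExterior Q).symm

theorem cliffordAlgebra_apply_of_isOrtho {b : Module.Basis I R M}
    {Q : QuadraticForm R M} (hb : Pairwise fun i j => Q.IsOrtho (b i) (b j)) (s : Finset I) :
    b.cliffordAlgebra Q s = (s.sort.map (ι Q ∘ b)).prod := by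
  have hs : (s.sort.map b).Pairwise Q.IsOrtho :=
    List.pairwise_map.mpr ((s.sort_nodup _).imp fun h => hb h)
  rw [cliffordAlgebra, map_apply, LinearEquiv.symm_apply_eq, ← List.map_map,
    CliffordAlgebra.equivExterior_prod_map_ι hs, List.map_map,
    ExteriorAlgebra.basis_apply_eq_prod_sort]

end Module.Basis

section Signature

variable {p q r : ℕ}

theorem Qf_apply_single (i : Fin (p + q + r)) : Qf p q r (Pi.single i 1) = cliffSig p q i := by
  simp [Qf, QuadraticMap.weightedSumSquares_apply, Pi.single_apply]

theorem Qf_isOrtho_single {i j : Fin (p + q + r)} (h : i ≠ j) :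
    (Qf p q r).IsOrtho (Pi.single i 1) (Pi.single j 1) := by
  simp only [QuadraticMap.isOrtho_def, Qf, QuadraticMap.weightedSumSquares_apply, Pi.add_apply,
    ← Finset.sum_add_distrib]
  refine Finset.sum_congr rfl fun k _ => ?_
  rcases eq_or_ne k i with rfl | _ <;> simp [Pi.single_apply, *]

theorem cliffSig_eq_zero_iff (i : ℕ) : cliffSig p q i = 0 ↔ p + q ≤ i := by
  unfold cliffSig
  split_ifs <;> simp <;> omega

theorem gen_mul_self (i : Fin (p + q + r)) :
    gen p q r i * gen p q r i = algebraMap ℝ _ (cliffSig p q i) := by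
  rw [gen, ι_sq_scalar, Qf_apply_single]

theorem gen_mul_gen_of_ne {i j : Fin (p + q + r)} (h : i ≠ j) :
    gen p q r i * gen p q r j = -(gen p q r j * gen p q r i) :=
  ι_mul_ι_comm_of_isOrtho (Qf_isOrtho_single h)

theorem involute_gen (i : Fin (p + q + r)) : involute (gen p q r i) = -gen p q r i :=
  involute_ι _

theorem gen_mul_prod (j : Fin (p + q + r)) (l : List (Fin (p + q + r))) :
    gen p q r j * (l.map (gen p q r)).prod
      = (-1 : ℝ) ^ l.countP (· ≠ j) • ((l.map (gen p q r)).prod * gen p q r j) := by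
  induction l with
  | nil => simp
  | cons i t ih =>
    rw [List.map_cons, List.prod_cons, List.countP_cons]
    rcases eq_or_ne i j with rfl | hij
    · conv_lhs => rw [ih, mul_smul_comm, ← mul_assoc]
      simp
    · rw [← mul_assoc, gen_mul_gen_of_ne hij.symm, neg_mul, mul_assoc, ih, mul_smul_comm,
        ← mul_assoc, ← neg_smul]
      simp [hij, pow_succ]

theorem gen_mul_prod_eq_zero {j : Fin (p + q + r)} (hj : p + q ≤ (j : ℕ))
    {l : List (Fin (p + q + r))} (hl : j ∈ l) : gen p q r j * (l.map (gen p q r)).prod = 0 := by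
  obtain ⟨s, t, rfl⟩ := List.append_of_mem hl
  rw [List.map_append, List.prod_append, List.map_cons, List.prod_cons, ← mul_assoc,
    gen_mul_prod, smul_mul_assoc, mul_assoc, ← mul_assoc (gen p q r j), gen_mul_self,
    (cliffSig_eq_zero_iff _).mpr hj]
  simp

theorem gen_mul_eq_involute_mul_of_mem_LambdaR {x : CliffordAlgebra (Qf p q r)}
    (hx : x ∈ LambdaR p q r) (j : Fin (p + q + r)) :
    gen p q r j * x = involute x * gen p q r j := by
  induction hx using Algebra.adjoin_induction with
  | mem x hx =>
    obtain ⟨k, hk, rfl⟩ := hx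
    rw [involute_gen, neg_mul]
    rcases eq_or_ne j k with rfl | hjk
    · rw [gen_mul_self, (cliffSig_eq_zero_iff _).mpr hk, map_zero, neg_zero]
    · exact gen_mul_gen_of_ne hjk
  | algebraMap c => rw [AlgHom.commutes, Algebra.commutes]
  | add x y _ _ hx hy => rw [mul_add, hx, hy, map_add, add_mul]
  | mul x y _ _ hx hy => rw [← mul_assoc, hx, mul_assoc, hy, map_mul, mul_assoc]

def evenLambdaR (p q r : ℕ) : Subalgebra ℝ (CliffordAlgebra (Qf p q r)) :=
  LambdaR p q r ⊓ AlgHom.equalizer involute (AlgHom.id ℝ _)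

theorem mem_evenLambdaR {x : CliffordAlgebra (Qf p q r)} :
    x ∈ evenLambdaR p q r ↔ x ∈ LambdaR p q r ∧ involute x = x :=
  Iff.rfl

theorem commute_gen_of_mem_evenLambdaR {x : CliffordAlgebra (Qf p q r)}
    (hx : x ∈ evenLambdaR p q r) (j : Fin (p + q + r)) : Commute (gen p q r j) x := by
  rw [mem_evenLambdaR] at hx
  rw [Commute, SemiconjBy, gen_mul_eq_involute_mul_of_mem_LambdaR hx.1, hx.2]

theorem commute_gen_of_mem_gradeSubspace (hn : Odd (p + q + r)) {x : CliffordAlgebra (Qf p q r)}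
    (hx : x ∈ gradeSubspace p q r (p + q + r)) (j : Fin (p + q + r)) :
    Commute (gen p q r j) x := by
  induction hx using Submodule.span_induction with
  | mem x hx =>
    obtain ⟨l, hl, hlen, rfl⟩ := hx
    have hnd : l.Nodup := (List.isChain_iff_pairwise.mp hl).nodup
    have hjl : j ∈ l := by
      have : l.toFinset = Finset.univ := Finset.eq_univ_of_card _ (by
        rw [List.toFinset_card_of_nodup hnd, hlen, Fintype.card_fin])
      rw [← List.mem_toFinset, this]
      exact Finset.mem_univ j
    have hcount : l.countP (· ≠ j) = p + q + r - 1 := by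
      have h := List.length_erase_of_mem hjl
      rw [hnd.erase_eq_filter, hlen] at h
      rw [List.countP_eq_length_filter, ← h]
      congr with x
      simp [bne, Bool.beq_eq_decide_eq]
    rw [Commute, SemiconjBy, gen_mul_prod, hcount, (Nat.Odd.sub_odd hn odd_one).neg_one_pow,
      one_smul]
  | zero => exact Commute.zero_right _
  | add x y _ _ hx hy => exact hx.add_right hy
  | smul c x _ hx => exact hx.smul_right c

theorem commute_of_forall_commute_gen {x : CliffordAlgebra (Qf p q r)}
    (hx : ∀ j, Commute (gen p q r j) x) (y : CliffordAlgebra (Qf p q r)) : Commute y x := by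
  induction y using CliffordAlgebra.induction with
  | algebraMap c => exact Algebra.commutes' c x
  | ι v =>
    rw [← (Pi.basisFun ℝ _).sum_repr v, map_sum]
    exact Commute.sum_left _ _ _ fun i _ => by
      rw [map_smul, Pi.basisFun_apply]
      exact (hx i).smul_left _
  | mul y z hy hz => exact hy.mul_left hz
  | add y z hy hz => exact hy.add_left hz

def cliffBasis (p q r : ℕ) :
    Module.Basis (Finset (Fin (p + q + r))) ℝ (CliffordAlgebra (Qf p q r)) :=
  (Pi.basisFun ℝ _).cliffordAlgebra (Qf p q r)

theorem cliffBasis_apply (S : Finset (Fin (p + q + r))) :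
    cliffBasis p q r S = (S.sort.map (gen p q r)).prod := by
  rw [cliffBasis, Module.Basis.cliffordAlgebra_apply_of_isOrtho]
  · congr 2
    funext i
    simp [gen]
  · intro i j h
    simpa using Qf_isOrtho_single h

theorem gen_mul_cliffBasis (j : Fin (p + q + r)) (S : Finset (Fin (p + q + r))) :
    gen p q r j * cliffBasis p q r S
      = (-1 : ℝ) ^ (S.filter (· ≠ j)).card • (cliffBasis p q r S * gen p q r j) := by
  rw [cliffBasis_apply, gen_mul_prod, ← Multiset.coe_countP, Finset.sort_eq,
    Multiset.countP_eq_card_filter]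
  rfl

theorem cliffBasis_repr_eq_zero_of_gen_mul_eq_zero {j : Fin (p + q + r)}
    {y : CliffordAlgebra (Qf p q r)} (hy : gen p q r j * y = 0) {S : Finset (Fin (p + q + r))}
    (hS : j ∉ S ∨ cliffSig p q j ≠ 0) : (cliffBasis p q r).repr y S = 0 := by
  by_cases hsig : cliffSig p q j = 0
  · have hjS := hS.resolve_right (not_not.mpr hsig)
    have hnull := (cliffSig_eq_zero_iff _).mp hsig
    -- `x ↦ e_j (d ⌋ x)` keeps the `e_T` with `j ∈ T`, kills the others, and fixes `y`.
    let d : Module.Dual ℝ (Fin (p + q + r) → ℝ) := LinearMap.proj j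
    have hcontract (x) : gen p q r j * contractLeft d x = x - contractLeft d (gen p q r j * x) := by
      rw [gen, contractLeft_ι_mul]
      simp [d]
    have hbasis (T : Finset (Fin (p + q + r))) : gen p q r j * contractLeft d (cliffBasis p q r T)
        = if j ∈ T then cliffBasis p q r T else 0 := by
      split_ifs with hjT
      · rw [hcontract, cliffBasis_apply, gen_mul_prod_eq_zero hnull (by simpa using hjT),
          map_zero, sub_zero]
      · rw [cliffBasis_apply, show gen p q r = ι (Qf p q r) ∘ fun i => Pi.single i 1 from rfl,
          ← List.map_map, contractLeft_prod_map_ι_eq_zero, mul_zero]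
        simp only [List.mem_map, Finset.mem_sort]
        rintro _ ⟨i, hi, rfl⟩
        simp [d, ne_of_mem_of_not_mem hi hjT]
    have hy' : y = ∑ T, (if j ∈ T then (cliffBasis p q r).repr y T else 0) • cliffBasis p q r T :=
      calc y = gen p q r j * contractLeft d y := by rw [hcontract, hy, map_zero, sub_zero]
        _ = _ := by
          conv_lhs => rw [← (cliffBasis p q r).sum_repr y]
          simp only [map_sum, map_smul, Finset.mul_sum, mul_smul_comm, hbasis, smul_ite, smul_zero,
            ite_smul, zero_smul]
    rw [hy', Module.Basis.repr_sum_self, if_neg hjS]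
  · have : cliffSig p q j • y = 0 := by
      rw [Algebra.smul_def, ← gen_mul_self, mul_assoc, hy, mul_zero]
    rw [(smul_eq_zero.mp this).resolve_left hsig, map_zero, Finsupp.zero_apply]

theorem even_card_filter_ne_of_cliffBasis_repr_ne_zero {x : CliffordAlgebra (Qf p q r)}
    (hx : ∀ j, Commute (gen p q r j) x) {S : Finset (Fin (p + q + r))}
    (hS : (cliffBasis p q r).repr x S ≠ 0) {j : Fin (p + q + r)}
    (hj : j ∉ S ∨ cliffSig p q j ≠ 0) : Even (S.filter (· ≠ j)).card := by
  set b := cliffBasis p q r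
  set ε : Finset (Fin (p + q + r)) → ℝ := fun T => (-1) ^ (T.filter (· ≠ j)).card
  have hε (T) : ε T * ε T = 1 := by
    simp only [ε, ← pow_add, ← two_mul, pow_mul, neg_one_sq, one_pow]
  set y := ∑ T, (b.repr x T * (1 - ε T)) • b T
  have hy : gen p q r j * y = 0 :=
    calc gen p q r j * y = gen p q r j * x - x * gen p q r j := by
          conv_rhs => rw [← b.sum_repr x]
          rw [Finset.mul_sum, Finset.mul_sum, Finset.sum_mul, ← Finset.sum_sub_distrib]
          refine Finset.sum_congr rfl fun T _ => ?_
          rw [mul_smul_comm, mul_smul_comm, smul_mul_assoc, gen_mul_cliffBasis, smul_smul,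
            smul_smul, ← sub_smul]
          congr 1
          linear_combination -(b.repr x T) * hε T
      _ = 0 := sub_eq_zero.mpr (hx j).eq
  have hcoeff := cliffBasis_repr_eq_zero_of_gen_mul_eq_zero hy hj
  rw [Module.Basis.repr_sum_self, mul_eq_zero, sub_eq_zero] at hcoeff
  exact (neg_one_pow_eq_one_iff_even (by norm_num)).mp (hcoeff.resolve_left hS).symm

theorem null_and_even_of_cliffBasis_repr_ne_zero {x : CliffordAlgebra (Qf p q r)}
    (hx : ∀ j, Commute (gen p q r j) x) {S : Finset (Fin (p + q + r))}
    (hS : (cliffBasis p q r).repr x S ≠ 0) (hSu : S ≠ Finset.univ) :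
    (∀ i ∈ S, p + q ≤ (i : ℕ)) ∧ Even S.card := by
  obtain ⟨j, hj⟩ : ∃ j, j ∉ S := by
    by_contra! h
    exact hSu (Finset.eq_univ_of_forall h)
  have heven : Even S.card := by
    simpa [Finset.filter_ne', hj] using
      even_card_filter_ne_of_cliffBasis_repr_ne_zero hx hS (Or.inl hj)
  refine ⟨fun i hi => (cliffSig_eq_zero_iff _).mp ?_, heven⟩
  by_contra hsig
  have hodd := even_card_filter_ne_of_cliffBasis_repr_ne_zero hx hS (Or.inr hsig)
  rw [Finset.filter_ne', Finset.card_erase_of_mem hi] at hodd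
  obtain ⟨k, hk⟩ := heven
  obtain ⟨m, hm⟩ := hodd
  have := Finset.card_pos.mpr ⟨i, hi⟩
  omega

theorem cliffBasis_mem_evenLambdaR {S : Finset (Fin (p + q + r))}
    (hnull : ∀ i ∈ S, p + q ≤ (i : ℕ)) (heven : Even S.card) :
    cliffBasis p q r S ∈ evenLambdaR p q r := by
  rw [mem_evenLambdaR, cliffBasis_apply]
  constructor
  · refine Subalgebra.list_prod_mem _ fun x hx => ?_
    obtain ⟨i, hi, rfl⟩ := List.mem_map.mp hx
    exact Algebra.subset_adjoin ⟨i, hnull i ((Finset.mem_sort _).mp hi), rfl⟩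
  · rw [map_list_prod, List.map_map,
      show involute ∘ gen p q r = Neg.neg ∘ gen p q r from funext involute_gen, ← List.map_map,
      List.prod_map_neg, List.length_map, Finset.length_sort, heven.neg_one_pow, one_mul]

theorem cliffBasis_univ_mem_gradeSubspace :
    cliffBasis p q r Finset.univ ∈ gradeSubspace p q r (p + q + r) :=
  Submodule.subset_span ⟨Finset.univ.sort, List.isChain_iff_pairwise.mpr
    (List.sortedLT_iff_pairwise.mp (Finset.sortedLT_sort _)), by simp, cliffBasis_apply _⟩

theorem exists_eq_add_of_forall_commute_gen {x : CliffordAlgebra (Qf p q r)}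
    (hx : ∀ j, Commute (gen p q r j) x) :
    ∃ L ∈ evenLambdaR p q r, ∃ D ∈ gradeSubspace p q r (p + q + r), x = L + D := by
  set b := cliffBasis p q r
  refine ⟨∑ S ∈ {Finset.univ}ᶜ, b.repr x S • b S, Subalgebra.sum_mem _ fun S hS => ?_,
    b.repr x Finset.univ • b Finset.univ,
    Submodule.smul_mem _ _ cliffBasis_univ_mem_gradeSubspace, ?_⟩
  · by_cases hc : b.repr x S = 0
    · rw [hc, zero_smul]
      exact zero_mem _
    · obtain ⟨hnull, heven⟩ := null_and_even_of_cliffBasis_repr_ne_zero hx hc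
        (by simpa using hS)
      exact Subalgebra.smul_mem _ (cliffBasis_mem_evenLambdaR hnull heven) _
  · conv_lhs => rw [← b.sum_repr x, Fintype.sum_eq_add_sum_compl Finset.univ, add_comm]

end Signature

/-- For `n = p + q + r` odd, the center of `Cl(p,q,r)` is the direct sum of the even part
of `Λ_r` and the grade-`n` subspace. -/
theorem stmt14 (p q r : ℕ) (hn : Odd (p + q + r)) (X : CliffordAlgebra (Qf p q r)) :
    (∀ Y : CliffordAlgebra (Qf p q r), X * Y = Y * X) ↔
      ∃ L D : CliffordAlgebra (Qf p q r), L ∈ LambdaR p q r ∧ involute L = L ∧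
        D ∈ gradeSubspace p q r (p + q + r) ∧ X = L + D := by
  have hcenter : (∀ Y, X * Y = Y * X) ↔ ∀ j, Commute (gen p q r j) X :=
    ⟨fun h j => (h _).symm, fun h Y => (commute_of_forall_commute_gen h Y).eq.symm⟩
  rw [hcenter]
  constructor
  · intro hX
    obtain ⟨L, hL, D, hD, rfl⟩ := exists_eq_add_of_forall_commute_gen hX
    exact ⟨L, D, hL.1, hL.2, hD, rfl⟩
  · rintro ⟨L, D, hL, hLinv, hD, rfl⟩ j
    exact (commute_gen_of_mem_evenLambdaR ⟨hL, hLinv⟩ j).add_right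
      (commute_gen_of_mem_gradeSubspace hn hD j)
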